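/- arXiv:1809.07054 — 8 statements merged into one kernel-verified Lean document; each statement's English description precedes it below -/
import Mathlib

section
/- For any countable family 𝒞 of subsets of ℕ, each having asymptotic density zero, there exists a set B ⊆ ℕ of asymptotic density zero such that every C ∈ 𝒞 is almost contained in B (i.e., C \ B is finite). -/
/-!
Enumerate the family as `f 0, f 1, …` and pass to the increasing unions `D k = f 0 ∪ ⋯ ∪ f k`,
which still have density zero. A diagonal argument gives a nondecreasing `κ : ℕ → ℕ` tending to
infinity so slowly that the density quotient of `D (κ n)` at `n` still tends to zero. Then
`B = {m | m ∈ D (κ m)}` works: `B ∩ [1, n] ⊆ D (κ n)` by monotonicity, and `D k \ B` lies in the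
finite set `{m | κ m < k}`.
-/

open Filter Topology

/-- `A ⊆ ℕ` has asymptotic density `d` if `|A ∩ [1,n]|/n → d`. -/
def densTendsto (A : Set ℕ) (d : ℝ) : Prop :=
  Tendsto (fun n : ℕ => (Nat.card ↑(A ∩ Set.Icc 1 n) : ℝ) / n) atTop (𝓝 d)

open Set

theorem exists_monotone_tendsto_diagonal {α : Type*} [PseudoMetricSpace α]
    {u : ℕ → ℕ → α} {x : α} (hu : ∀ k, Tendsto (u k) atTop (𝓝 x)) :
    ∃ κ : ℕ → ℕ, Monotone κ ∧ Tendsto κ atTop atTop ∧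
      Tendsto (fun n => u (κ n) n) atTop (𝓝 x) := by
  choose M hM using fun k : ℕ =>
    Metric.tendsto_atTop.1 (hu k) (1 / (k + 1)) Nat.one_div_pos_of_nat
  -- `κ n` is the largest `k ≤ n` whose threshold `M k` has been passed by `n`.
  let κ n := Nat.findGreatest (fun k => M k ≤ n) n
  have hκ_ge : ∀ k n, k ≤ n → M k ≤ n → k ≤ κ n := fun _ n =>
    Nat.le_findGreatest (P := fun k => M k ≤ n)
  have hM_κ : ∀ n, M 0 ≤ n → M (κ n) ≤ n := fun n =>
    Nat.findGreatest_spec (P := fun k => M k ≤ n) n.zero_le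
  have hκ : Tendsto κ atTop atTop := tendsto_atTop_atTop.2 fun k =>
    ⟨max k (M k), fun n hn => hκ_ge k n (le_of_max_le_left hn) (le_of_max_le_right hn)⟩
  refine ⟨κ, fun m n hmn => Nat.findGreatest_mono (fun k hk => hk.trans hmn) hmn, hκ, ?_⟩
  rw [tendsto_iff_dist_tendsto_zero]
  refine squeeze_zero' (.of_forall fun n => dist_nonneg) ?_
    (tendsto_one_div_add_atTop_nhds_zero_nat.comp hκ)
  filter_upwards [eventually_ge_atTop (M 0)] with n hn
  exact (hM _ n (hM_κ n hn)).le

theorem densTendsto_zero_of_le {A : Set ℕ} {u : ℕ → ℝ} (hu : Tendsto u atTop (𝓝 0))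
    (h : ∀ᶠ n in atTop, (Nat.card ↑(A ∩ Icc 1 n) : ℝ) / n ≤ u n) : densTendsto A 0 :=
  squeeze_zero' (.of_forall fun _ => by positivity) h hu

theorem densTendsto_zero_union {A B : Set ℕ} (hA : densTendsto A 0) (hB : densTendsto B 0) :
    densTendsto (A ∪ B) 0 := by
  refine densTendsto_zero_of_le (by simpa using hA.add hB) (.of_forall fun n => ?_)
  rw [← add_div, union_inter_distrib_right]
  gcongr
  simp only [Nat.card_coe_set_eq]
  exact_mod_cast ncard_union_le _ _

theorem densTendsto_zero_accumulate {f : ℕ → Set ℕ} (hf : ∀ k, densTendsto (f k) 0) (k : ℕ) :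
    densTendsto (accumulate f k) 0 := by
  induction k with
  | zero => simpa using hf 0
  | succ k ih => simpa using densTendsto_zero_union ih (hf (k + 1))

theorem Monotone.exists_densTendsto_zero_diff_finite {D : ℕ → Set ℕ} (hD : Monotone D)
    (hD0 : ∀ k, densTendsto (D k) 0) :
    ∃ B : Set ℕ, densTendsto B 0 ∧ ∀ k, (D k \ B).Finite := by
  obtain ⟨κ, hκ_mono, hκ, hdens⟩ := exists_monotone_tendsto_diagonal hD0
  refine ⟨{m | m ∈ D (κ m)}, densTendsto_zero_of_le hdens (.of_forall fun n => ?_), fun k => ?_⟩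
  · gcongr
    refine Nat.card_mono ((finite_Icc 1 n).inter_of_right _) fun m ⟨hm, hmn⟩ => ⟨?_, hmn⟩
    exact hD (hκ_mono hmn.2) hm
  · refine (Nat.cofinite_eq_atTop ▸ hκ.eventually_ge_atTop k).subset fun m ⟨hm, hmB⟩ hkm => ?_
    exact hmB (hD hkm hm)

/-- For any countable family of subsets of ℕ of asymptotic density zero, there is a set `B`
of asymptotic density zero almost containing every member of the family. -/
theorem stmt_0 (𝒞 : Set (Set ℕ)) (hc : 𝒞.Countable)
    (hz : ∀ C ∈ 𝒞, densTendsto C 0) :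
    ∃ B : Set ℕ, densTendsto B 0 ∧ ∀ C ∈ 𝒞, (C \ B).Finite := by
  rcases 𝒞.eq_empty_or_nonempty with rfl | h𝒞
  · exact ⟨∅, by simp [densTendsto], by simp⟩
  obtain ⟨f, rfl⟩ := hc.exists_eq_range h𝒞
  obtain ⟨B, hB, hfB⟩ := monotone_accumulate.exists_densTendsto_zero_diff_finite
    (densTendsto_zero_accumulate fun k => hz _ ⟨k, rfl⟩)
  exact ⟨B, hB, forall_mem_range.2 fun k =>
    (hfB k).subset (sdiff_subset_sdiff_left (subset_accumulate (x := k)))⟩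
end

section
/- Let X be a Tychonoff space. Every metrizable topological space that is a continuous image of C_p(X) (the space of continuous real-valued functions on X with the topology of pointwise convergence) is separable. -/
open Filter Topology TopologicalSpace

/-- No uncountable strict antichain of finite partial rational-valued functions. -/
lemma antichain_countable {X : Type*} [DecidableEq X] : ∀ (n : ℕ) {I : Type*} (S : Set I)
    (F : I → Finset X) (p : I → X → ℚ),
    (∀ s ∈ S, (F s).card ≤ n) →
    (∀ s ∈ S, ∀ t ∈ S, s ≠ t → ∃ x ∈ F s ∩ F t, p s x ≠ p t x) →
    S.Countable := by
  intro n
  induction n with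
  | zero =>
    intro I S F p hcard hinc
    apply Set.Subsingleton.countable
    intro s hs t ht
    by_contra hne
    obtain ⟨x, hx, -⟩ := hinc s hs t ht hne
    have h0 : F s = ∅ := Finset.card_eq_zero.mp (Nat.le_zero.mp (hcard s hs))
    rw [Finset.mem_inter, h0] at hx
    exact absurd hx.1 (Finset.notMem_empty x)
  | succ n ih =>
    intro I S F p hcard hinc
    rcases S.eq_empty_or_nonempty with rfl | ⟨s₀, hs₀⟩
    · exact Set.countable_empty
    have hsub : S ⊆ insert s₀ (⋃ x ∈ F s₀, ⋃ d : ℚ,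
        {t | t ∈ S ∧ t ≠ s₀ ∧ x ∈ F t ∧ p t x = d}) := by
      intro t ht
      rcases eq_or_ne t s₀ with rfl | hne
      · exact Set.mem_insert _ _
      · obtain ⟨x, hx, -⟩ := hinc t ht s₀ hs₀ hne
        rw [Finset.mem_inter] at hx
        refine Set.mem_insert_iff.mpr (Or.inr ?_)
        simp only [Set.mem_iUnion]
        exact ⟨x, hx.2, p t x, ht, hne, hx.1, rfl⟩
    refine Set.Countable.mono hsub ?_
    refine Set.Countable.insert _ ?_
    refine Set.Countable.biUnion (Finset.countable_toSet _) fun x hx => ?_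
    refine Set.countable_iUnion fun d => ?_
    refine ih _ (fun t => (F t).erase x) p ?_ ?_
    · rintro t ⟨ht, -, hxt, -⟩
      rw [Finset.card_erase_of_mem hxt]
      have := hcard t ht
      omega
    · rintro t ⟨ht, -, hxt, hpt⟩ u ⟨hu, -, hxu, hpu⟩ hne
      obtain ⟨y, hy, hpy⟩ := hinc t ht u hu hne
      rw [Finset.mem_inter] at hy
      refine ⟨y, ?_, hpy⟩
      have hyx : y ≠ x := by
        rintro rfl
        exact hpy (hpt.trans hpu.symm)
      rw [Finset.mem_inter]
      exact ⟨Finset.mem_erase.mpr ⟨hyx, hy.1⟩, Finset.mem_erase.mpr ⟨hyx, hy.2⟩⟩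

/-- Prescribing finitely many values of a continuous function on a Tychonoff space. -/
lemma exists_continuous_eq_on {X : Type*} [TopologicalSpace X] [T35Space X] [DecidableEq X]
    (G : Finset X) (v : X → ℝ) :
    ∃ h : X → ℝ, Continuous h ∧ ∀ x ∈ G, h x = v x := by
  have key : ∀ x ∈ G, ∃ φ : X → ℝ, Continuous φ ∧ φ x = 1 ∧ ∀ y ∈ G, y ≠ x → φ y = 0 := by
    intro x hx
    have hK : IsClosed ((G.erase x : Finset X) : Set X) :=
      (Set.Finite.ofFinset _ fun _ => Iff.rfl).isClosed
    have hxK : x ∉ ((G.erase x : Finset X) : Set X) := by simp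
    obtain ⟨f, hf, hfx, hfK⟩ := CompletelyRegularSpace.completely_regular x _ hK hxK
    refine ⟨fun z => 1 - (f z : ℝ), (continuous_const.sub (continuous_subtype_val.comp hf)), ?_, ?_⟩
    · show 1 - ((f x : ℝ)) = 1
      rw [hfx]; norm_num
    · intro y hy hyx
      have h1 : f y = 1 := hfK (by simp [Finset.mem_erase, hyx, hy])
      show 1 - ((f y : ℝ)) = 0
      rw [h1]; norm_num
  choose! φ hφc hφ1 hφ0 using key
  refine ⟨fun z => ∑ x ∈ G, v x * φ x z, ?_, ?_⟩
  · exact continuous_finset_sum _ fun x hx => continuous_const.mul (hφc x hx)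
  · intro y hy
    show ∑ x ∈ G, v x * φ x y = v y
    rw [Finset.sum_eq_single y]
    · rw [hφ1 y hy]; ring
    · intro x hx hxy
      rw [hφ0 x hx y hy (Ne.symm hxy)]; ring
    · intro h; exact absurd hy h

/-- A metric space in which every uniformly separated set is countable is separable. -/
lemma separable_of_separated_countable {Y : Type*} [MetricSpace Y]
    (H : ∀ ε : ℝ, 0 < ε → ∀ S : Set Y, (S.Pairwise fun a b => ε ≤ dist a b) → S.Countable) :
    SeparableSpace Y := by
  have key : ∀ n : ℕ, ∃ D : Set Y, D.Countable ∧ ∀ y : Y, ∃ d ∈ D, dist y d < 1/(n+1) := by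
    intro n
    have hpos : (0:ℝ) < 1/(n+1) := by positivity
    have hchainub : ∀ c ⊆ {S : Set Y | S.Pairwise fun a b => 1/(n+1) ≤ dist a b},
        IsChain (· ⊆ ·) c → ∃ ub ∈ {S : Set Y | S.Pairwise fun a b => 1/(n+1) ≤ dist a b},
          ∀ s ∈ c, s ⊆ ub := by
      intro c hc hchain
      refine ⟨⋃₀ c, ?_, fun s hs => Set.subset_sUnion_of_mem hs⟩
      intro a ha b hb hne
      obtain ⟨s, hs, has⟩ := ha
      obtain ⟨t, ht, hbt⟩ := hb
      rcases hchain.total hs ht with h | h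
      · exact hc ht (h has) hbt hne
      · exact hc hs has (h hbt) hne
    obtain ⟨D, hD⟩ := zorn_subset {S : Set Y | S.Pairwise fun a b => 1/(n+1) ≤ dist a b} hchainub
    refine ⟨D, H _ hpos D hD.prop, fun y => ?_⟩
    by_cases hy : y ∈ D
    · exact ⟨y, hy, by simpa using hpos⟩
    · by_contra hcon
      push_neg at hcon
      have hmem : insert y D ∈ {S : Set Y | S.Pairwise fun a b => 1/(n+1) ≤ dist a b} := by
        refine Set.Pairwise.insert hD.prop fun d hd hne => ?_
        have h1 := hcon d hd
        exact ⟨h1, by rwa [dist_comm]⟩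
      have := hD.eq_of_subset hmem (Set.subset_insert y D)
      exact hy (this ▸ Set.mem_insert y D)
  choose D hDc hDd using key
  refine ⟨⟨⋃ n, D n, Set.countable_iUnion hDc, ?_⟩⟩
  rw [Metric.dense_iff]
  intro y r hr
  obtain ⟨n, hn⟩ := exists_nat_one_div_lt hr
  obtain ⟨d, hd, hdy⟩ := hDd n y
  exact ⟨d, by rw [dist_comm] at hdy; exact Metric.mem_ball.mpr (hdy.trans hn), Set.mem_iUnion.mpr ⟨n, hd⟩⟩

/-- `C_p(X)`: continuous real functions on `X` with the topology of pointwise convergence,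
realized as a subspace of the product `ℝ^X`. -/
def Cp (X : Type*) [TopologicalSpace X] : Type _ := {f : X → ℝ // Continuous f}

instance (X : Type*) [TopologicalSpace X] : TopologicalSpace (Cp X) :=
  TopologicalSpace.induced (fun f : Cp X => (f.1 : X → ℝ)) inferInstance

/-- Every metrizable continuous image of `C_p(X)`, `X` Tychonoff, is separable. -/
theorem stmt_6 (X : Type*) [TopologicalSpace X] [T35Space X]
    (Y : Type*) [TopologicalSpace Y] [MetrizableSpace Y]
    (g : Cp X → Y) (hg : Continuous g) (hsurj : Function.Surjective g) :
    SeparableSpace Y := by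
  classical
  letI : MetricSpace Y := TopologicalSpace.metrizableSpaceMetric Y
  apply separable_of_separated_countable
  intro ε hε S hS
  have hε2 : 0 < ε/2 := by linarith
  set f : Y → Cp X := fun y => (hsurj y).choose with hfdef
  have hgf : ∀ y, g (f y) = y := fun y => (hsurj y).choose_spec
  have hind : IsInducing (fun h : Cp X => (h.1 : X → ℝ)) := ⟨rfl⟩
  -- basic neighborhood data with uniform rational-scale radius
  have key : ∀ y : Y, ∃ (F : Finset X) (N : ℕ), ∀ h : Cp X,
      (∀ x ∈ F, |h.1 x - (f y).1 x| < 1/(N+1)) → dist (g h) y < ε/2 := by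
    intro y
    have hopen : IsOpen (g ⁻¹' Metric.ball y (ε/2)) :=
      Metric.isOpen_ball.preimage hg
    rw [hind.isOpen_iff] at hopen
    obtain ⟨U, hU, hUeq⟩ := hopen
    have hyU : (f y).1 ∈ U := by
      have : f y ∈ (fun h : Cp X => (h.1 : X → ℝ)) ⁻¹' U := by
        rw [hUeq]
        simp [Set.mem_preimage, hgf y, Metric.mem_ball, hε2]
      exact this
    obtain ⟨F, u, hu, hpi⟩ := isOpen_pi_iff.mp hU _ hyU
    have hb : ∀ x ∈ F, ∃ δ > 0, Metric.ball ((f y).1 x) δ ⊆ u x := by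
      intro x hx
      exact Metric.isOpen_iff.mp (hu x hx).1 _ (hu x hx).2
    choose! δ hδpos hδball using hb
    by_cases hFne : F.Nonempty
    · set δ₀ := F.inf' hFne δ with hδ₀
      have hδ₀pos : 0 < δ₀ := by
        rw [hδ₀, Finset.lt_inf'_iff]
        exact fun x hx => hδpos x hx
      refine ⟨F, ⌈1/δ₀⌉₊, fun h hh => ?_⟩
      have hNle : 1/((⌈1/δ₀⌉₊:ℝ)+1) ≤ δ₀ := by
        rw [one_div_le (by positivity) hδ₀pos]
        exact (Nat.le_ceil _).trans (by linarith)
      have hmem : h.1 ∈ U := by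
        apply hpi
        intro x hx
        apply hδball x hx
        rw [Metric.mem_ball, Real.dist_eq]
        calc |h.1 x - (f y).1 x| < 1/((⌈1/δ₀⌉₊:ℝ)+1) := hh x hx
          _ ≤ δ₀ := hNle
          _ ≤ δ x := Finset.inf'_le _ hx
      have : h ∈ (fun h : Cp X => (h.1 : X → ℝ)) ⁻¹' U := hmem
      rw [hUeq] at this
      exact this
    · refine ⟨F, 0, fun h hh => ?_⟩
      have hmem : h.1 ∈ U := by
        apply hpi
        intro x hx
        exact absurd ⟨x, hx⟩ hFne
      have : h ∈ (fun h : Cp X => (h.1 : X → ℝ)) ⁻¹' U := hmem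
      rw [hUeq] at this
      exact this
  choose F N hFN using key
  -- rational approximations
  have happrox : ∀ (y : Y) (x : X), ∃ r : ℚ,
      |(r:ℝ) - (f y).1 x| < 1/(2*(N y + 1)) := by
    intro y x
    have hpos : (0:ℝ) < 1/(2*(N y + 1)) := by positivity
    obtain ⟨r, hr1, hr2⟩ := exists_rat_btwn
      (show (f y).1 x - 1/(2*(N y + 1)) < (f y).1 x + 1/(2*(N y + 1)) by linarith)
    exact ⟨r, abs_sub_lt_iff.mpr ⟨by linarith, by linarith⟩⟩
  choose q hq using happrox
  -- countable decomposition
  have hsub : S ⊆ ⋃ (n : ℕ) (m : ℕ), {s | s ∈ S ∧ N s = n ∧ (F s).card = m} := by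
    intro s hs
    simp only [Set.mem_iUnion]
    exact ⟨N s, (F s).card, hs, rfl, rfl⟩
  refine Set.Countable.mono hsub ?_
  refine Set.countable_iUnion fun n => Set.countable_iUnion fun m => ?_
  refine antichain_countable m _ F q (fun s hs => hs.2.2.le) ?_
  rintro s ⟨hsS, hsN, -⟩ t ⟨htS, htN, -⟩ hne
  by_contra hcon
  push_neg at hcon
  -- build a continuous function realizing both rational patterns
  obtain ⟨h, hc, hv⟩ := exists_continuous_eq_on (F s ∪ F t)
    (fun x => if x ∈ F s then (q s x : ℝ) else (q t x : ℝ))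
  set H : Cp X := ⟨h, hc⟩ with hH
  have hhalf : ∀ y : Y, 1/(2*((N y:ℝ) + 1)) < 1/((N y:ℝ)+1) := by
    intro y
    have h1 : (0:ℝ) < (N y:ℝ)+1 := by positivity
    exact one_div_lt_one_div_of_lt h1 (by linarith)
  have hds : dist (g H) s < ε/2 := by
    apply hFN s
    intro x hx
    have hvx : h x = (q s x : ℝ) := by
      rw [hv x (Finset.mem_union_left _ hx)]
      simp [hx]
    show |h x - (f s).1 x| < 1/((N s:ℝ)+1)
    rw [hvx]
    exact (hq s x).trans (hhalf s)
  have hdt : dist (g H) t < ε/2 := by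
    apply hFN t
    intro x hx
    have hvx : h x = (q t x : ℝ) := by
      rw [hv x (Finset.mem_union_right _ hx)]
      by_cases hxs : x ∈ F s
      · simp only [hxs, if_true]
        exact_mod_cast hcon x (Finset.mem_inter.mpr ⟨hxs, hx⟩)
      · simp [hxs]
    show |h x - (f t).1 x| < 1/((N t:ℝ)+1)
    rw [hvx]
    exact (hq t x).trans (hhalf t)
  have : dist s t < ε := by
    calc dist s t ≤ dist s (g H) + dist (g H) t := dist_triangle _ _ _
      _ < ε/2 + ε/2 := by rw [dist_comm s (g H)]; exact add_lt_add hds hdt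
      _ = ε := by ring
  exact absurd (hS hsS htS hne) (not_le.mpr this)
end

section
/- For any set X, the product space ℝ^X has countable cellularity: every family of pairwise disjoint nonempty open subsets of ℝ^X is countable. -/
open MeasureTheory Set ProbabilityTheory
open scoped ENNReal NNReal

/-- A fixed probability measure on `ℝ` with full support. -/
noncomputable def ccc_mu0 : Measure ℝ := gaussianReal 0 1

instance : IsProbabilityMeasure ccc_mu0 := by
  unfold ccc_mu0; infer_instance

lemma ccc_mu0_pos_of_open {V : Set ℝ} (hV : IsOpen V) (hne : V.Nonempty) : ccc_mu0 V ≠ 0 := by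
  intro h
  rw [ccc_mu0, gaussianReal_of_var_ne_zero _ one_ne_zero,
    withDensity_apply_eq_zero (measurable_gaussianPDF _ _)] at h
  have hsupp : {x | gaussianPDF 0 1 x ≠ 0} = Set.univ := by
    ext x
    simp [(gaussianPDF_pos 0 one_ne_zero x).ne']
  rw [hsupp, Set.univ_inter] at h
  exact (hV.measure_pos volume hne).ne' h

/-- For any set `X`, the product `ℝ^X` has countable cellularity: every pairwise disjoint
family of nonempty open subsets is countable. -/
theorem stmt_7 (X : Type*) (𝒰 : Set (Set (X → ℝ)))
    (hopen : ∀ U ∈ 𝒰, IsOpen U ∧ U.Nonempty) (hdisj : 𝒰.Pairwise Disjoint) :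
    𝒰.Countable := by
  classical
  -- Choose inside each `U ∈ 𝒰` a basic open box with finite support.
  have hchoice : ∀ U ∈ 𝒰, ∃ (I : Finset X) (u : X → Set ℝ),
      (∀ i ∈ I, IsOpen (u i) ∧ (u i).Nonempty) ∧ (I : Set X).pi u ⊆ U := by
    intro U hU
    obtain ⟨hUo, f, hf⟩ := hopen U hU
    obtain ⟨I, u, h1, h2⟩ := isOpen_pi_iff.mp hUo f hf
    exact ⟨I, u, fun i hi => ⟨(h1 i hi).1, ⟨f i, (h1 i hi).2⟩⟩, h2⟩
  choose! S V hSV hsub using hchoice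
  -- the weight of each box
  set w : Set (X → ℝ) → ℝ≥0∞ := fun U => ∏ i ∈ S U, ccc_mu0 (V U i) with hw
  have hwpos : ∀ U ∈ 𝒰, w U ≠ 0 := by
    intro U hU
    refine Finset.prod_ne_zero_iff.mpr fun i hi => ?_
    exact ccc_mu0_pos_of_open (hSV U hU i hi).1 (hSV U hU i hi).2
  -- key: every finite subfamily has total weight at most 1
  have hkey : ∀ T : Finset (Set (X → ℝ)), ↑T ⊆ 𝒰 → ∑ U ∈ T, w U ≤ 1 := by
    intro T hT
    set F : Finset X := T.biUnion S with hF
    set π : Measure (↥F → ℝ) := Measure.pi (fun _ => ccc_mu0) with hπ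
    haveI : IsProbabilityMeasure π := by rw [hπ]; infer_instance
    set t : Set (X → ℝ) → (↥F → Set ℝ) :=
      fun U i => if (i : X) ∈ S U then V U (i : X) else Set.univ with ht
    set C : Set (X → ℝ) → Set (↥F → ℝ) := fun U => Set.pi Set.univ (t U) with hC
    have hSsub : ∀ U ∈ T, S U ⊆ F := fun U hU i hi => Finset.mem_biUnion.mpr ⟨U, hU, hi⟩
    have hmeas : ∀ U ∈ T, MeasurableSet (C U) := by
      intro U hU
      refine MeasurableSet.univ_pi fun i => ?_
      by_cases h : (i : X) ∈ S U
      · simp only [ht, if_pos h]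
        exact ((hSV U (hT hU) _ h).1).measurableSet
      · simp only [ht, if_neg h]
        exact MeasurableSet.univ
    have hμC : ∀ U ∈ T, π (C U) = w U := by
      intro U hU
      rw [hC, hπ, Measure.pi_pi]
      have h1 : ∏ i : ↥F, ccc_mu0 (t U i) = ∏ i ∈ F, ccc_mu0 (if i ∈ S U then V U i else Set.univ) := by
        rw [← Finset.prod_coe_sort F (fun i => ccc_mu0 (if i ∈ S U then V U i else Set.univ))]
      rw [h1]
      rw [hw]
      refine (Finset.prod_subset (hSsub U hU) ?_).symm.trans ?_
      · intro x _ hx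
        simp [hx]
      · refine Finset.prod_congr rfl fun i hi => ?_
        rw [if_pos hi]
    have hdisjC : (↑T : Set (Set (X → ℝ))).PairwiseDisjoint C := by
      intro U hU U' hU' hne
      rw [Function.onFun_apply, Set.disjoint_left]
      intro g hg hg'
      set h : X → ℝ := fun x => if hx : x ∈ F then g ⟨x, hx⟩ else 0 with hh
      have hmem : ∀ W, W ∈ T → g ∈ C W → h ∈ W := by
        intro W hW hgW
        refine hsub W (hT hW) ?_
        intro i hi
        have hi' : i ∈ S W := hi
        have hiF : i ∈ F := hSsub W hW hi'
        have := hgW ⟨i, hiF⟩ (Set.mem_univ _)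
        simp only [ht, if_pos hi'] at this
        simpa [hh, dif_pos hiF] using this
      exact Set.disjoint_left.mp (hdisj (hT hU) (hT hU') hne) (hmem U hU hg) (hmem U' hU' hg')
    calc ∑ U ∈ T, w U = ∑ U ∈ T, π (C U) := Finset.sum_congr rfl fun U hU => (hμC U hU).symm
      _ = π (⋃ U ∈ T, C U) := (measure_biUnion_finset hdisjC hmeas).symm
      _ ≤ π Set.univ := measure_mono (Set.subset_univ _)
      _ = 1 := measure_univ
  -- conclude countability
  have htsum : ∑' u : ↥𝒰, w u.1 ≤ 1 := by
    rw [ENNReal.tsum_eq_iSup_sum]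
    refine iSup_le fun s => ?_
    have := hkey (s.image Subtype.val) ?_
    · rwa [Finset.sum_image (fun a _ b _ hab => Subtype.val_injective hab)] at this
    · intro U hU
      obtain ⟨u, _, rfl⟩ := Finset.mem_image.mp hU
      exact u.2
  have hcnt : (Function.support fun u : ↥𝒰 => w u.1).Countable :=
    Summable.countable_support_ennreal (lt_of_le_of_lt htsum ENNReal.one_lt_top).ne
  have hall : (Function.support fun u : ↥𝒰 => w u.1) = Set.univ := by
    ext u
    simp [Function.mem_support, hwpos u.1 u.2]
  rw [hall] at hcnt
  haveI : Countable ↥𝒰 := Set.countable_univ_iff.mp hcnt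
  exact Set.countable_coe_iff.mpr ‹_›
end

section
/- Let X be a pseudocompact Tychonoff space, M a compact metrizable space, and f : X → M a continuous surjection. Suppose φ : X → ℝ is continuous and constant on the fibers of f (i.e., f(x) = f(y) implies φ(x) = φ(y)). Then the induced function ψ : M → ℝ with φ = ψ ∘ f is continuous. -/
open Filter Topology TopologicalSpace

/-- Let `X` be pseudocompact Tychonoff, `M` compact metrizable, `f : X → M` a continuous
surjection, and `φ : X → ℝ` continuous and constant on fibers of `f`, i.e. `φ = ψ ∘ f`.
Then `ψ` is continuous. -/
theorem stmt_10 (X : Type*) [TopologicalSpace X] [T35Space X]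
    (hpc : ∀ g : C(X, ℝ), ∃ C : ℝ, ∀ x, |g x| ≤ C)
    (M : Type*) [TopologicalSpace M] [CompactSpace M] [MetrizableSpace M]
    (f : X → M) (hf : Continuous f) (hsurj : Function.Surjective f)
    (φ : X → ℝ) (hφ : Continuous φ)
    (ψ : M → ℝ) (hψ : φ = ψ ∘ f) :
    Continuous ψ := by
  letI : MetricSpace M := TopologicalSpace.metrizableSpaceMetric M
  obtain ⟨C, hC⟩ := hpc ⟨φ, hφ⟩
  have hψval : ∀ m, ∃ x, f x = m ∧ ψ m = φ x := by
    intro m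
    obtain ⟨x, hx⟩ := hsurj m
    exact ⟨x, hx, by rw [hψ]; simp [hx]⟩
  choose sec hsec1 hsec2 using hψval
  have hψbdd : ∀ m, |ψ m| ≤ C := fun m => by rw [hsec2 m]; exact hC _
  rw [continuous_iff_seqContinuous]
  intro u m hu
  by_contra hnot
  rw [Metric.tendsto_atTop] at hnot
  push_neg at hnot
  obtain ⟨ε, hε, hfreq⟩ := hnot
  obtain ⟨s, hs_mono, hs⟩ := Filter.extraction_of_frequently_atTop
    (Filter.frequently_atTop.2 hfreq)
  -- hs : ∀ k, ε ≤ dist (ψ (u (s k))) (ψ m)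
  have hmem : ∀ k, ψ (u (s k)) ∈ Set.Icc (-C) C := fun k => abs_le.mp (hψbdd _)
  obtain ⟨t, -, s', hs'_mono, hts⟩ :=
    tendsto_subseq_of_bounded (Metric.isBounded_Icc (a := -C) (b := C)) hmem
  set n : ℕ → ℕ := fun k => s (s' k) with hn
  have hun : Tendsto (fun k => u (n k)) atTop (𝓝 m) :=
    hu.comp ((hs_mono.comp hs'_mono).tendsto_atTop)
  have htne : ε ≤ dist t (ψ m) := by
    have : Tendsto (fun k => dist (ψ (u (n k))) (ψ m)) atTop (𝓝 (dist t (ψ m))) :=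
      (hts.dist tendsto_const_nhds)
    exact ge_of_tendsto' this fun k => hs (s' k)
  have htne' : t ≠ ψ m := by
    intro h; rw [h, dist_self] at htne; linarith
  set D : X → ℝ := fun x => dist (f x) m + |φ x - t| with hD
  have hDpos : ∀ x, 0 < D x := by
    intro x
    rcases lt_or_eq_of_le (dist_nonneg (x := f x) (y := m)) with h | h
    · exact lt_of_lt_of_le h (le_add_of_nonneg_right (abs_nonneg _))
    · have hfx : f x = m := by rwa [eq_comm, dist_eq_zero] at h
      have hφx : φ x = ψ m := by rw [hψ]; simp [hfx]
      have hne : φ x - t ≠ 0 := sub_ne_zero.mpr (by rw [hφx]; exact fun hh => htne' hh.symm)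
      have habs : 0 < |φ x - t| := abs_pos.mpr hne
      have hDx : D x = |φ x - t| := by simp [hD, ← h]
      rw [hDx]; exact habs
  have hDcont : Continuous D := (hf.dist continuous_const).add (hφ.sub continuous_const).abs
  obtain ⟨C', hC'⟩ := hpc ⟨fun x => (D x)⁻¹, hDcont.inv₀ fun x => (hDpos x).ne'⟩
  have hC'pos : 0 < C' := lt_of_lt_of_le (inv_pos.2 (hDpos (sec m)))
    (le_trans (le_abs_self _) (hC' (sec m)))
  have hDlb : ∀ x, C'⁻¹ ≤ D x := by
    intro x
    have h1 : (D x)⁻¹ ≤ C' := le_trans (le_abs_self _) (hC' x)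
    calc C'⁻¹ ≤ ((D x)⁻¹)⁻¹ := by
          apply inv_anti₀ (inv_pos.2 (hDpos x)) h1
      _ = D x := inv_inv _
  -- the sequence D (sec (u (n k))) tends to 0
  have hT : Tendsto (fun k => D (sec (u (n k)))) atTop (𝓝 0) := by
    have h1 : Tendsto (fun k => dist (u (n k)) m) atTop (𝓝 0) :=
      tendsto_iff_dist_tendsto_zero.mp hun
    have h2 : Tendsto (fun k => |ψ (u (n k)) - t|) atTop (𝓝 0) := by
      have := tendsto_iff_dist_tendsto_zero.mp hts
      simpa [Real.dist_eq] using this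
    have := h1.add h2
    simp only [add_zero] at this
    convert this using 2 with k
    simp [hD, hsec1, (hsec2 (u (n k))).symm]
  have hev : ∀ᶠ k in atTop, D (sec (u (n k))) < C'⁻¹ :=
    hT.eventually (gt_mem_nhds (inv_pos.2 hC'pos))
  obtain ⟨k, hk⟩ := hev.exists
  exact absurd (hDlb (sec (u (n k)))) (not_le.2 hk)
end

section
/- Let X be a pseudocompact Tychonoff space, M a compact metrizable space, and f : X → M a continuous surjection. Then the image of the induced embedding C_p(f) : C_p(M) → C_p(X), φ ↦ φ ∘ f, is a closed linear subspace of C_p(X). -/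
open Filter Topology TopologicalSpace

/-- In a pseudocompact Tychonoff space, a decreasing sequence of nonempty open sets has a
point in the intersection of the closures. -/
lemma pseudocompact_cluster {X : Type*} [TopologicalSpace X] [T35Space X]
    (hpc : ∀ g : C(X, ℝ), ∃ C : ℝ, ∀ x, |g x| ≤ C)
    (U : ℕ → Set X) (hop : ∀ n, IsOpen (U n)) (hne : ∀ n, (U n).Nonempty)
    (hmono : Antitone U) : ∃ p, ∀ n, p ∈ closure (U n) := by
  by_contra h
  push_neg at h
  choose x hx using hne
  -- for each n, a continuous bump supported in U n with value 1 at x n, in [0,1]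
  have hcr : ∀ n, ∃ fn : X → ℝ, Continuous fn ∧ fn (x n) = 1 ∧ (∀ y, y ∉ U n → fn y = 0) ∧
      ∀ y, fn y ∈ Set.Icc (0:ℝ) 1 := by
    intro n
    obtain ⟨f, hfc, hfx, hfK⟩ := CompletelyRegularSpace.completely_regular (x n) (U n)ᶜ
      (hop n).isClosed_compl (by simp [hx n])
    refine ⟨fun y => 1 - (f y : ℝ), by continuity, by simp [hfx], ?_, ?_⟩
    · intro y hy
      have := hfK hy
      simp only [Pi.one_apply] at this
      simp [this]
    · intro y
      have h0 := (f y).2.1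
      have h1 := (f y).2.2
      constructor <;> simp <;> linarith
  choose fn hfc hfx hf0 hf01 using hcr
  -- the unbounded function
  set G : X → ℝ := fun y => ∑' (n : ℕ), (n : ℝ) * fn n y with hG
  -- local finiteness
  have key : ∀ p : X, ∃ N : ℕ, ∃ V ∈ 𝓝 p, ∀ y ∈ V, ∀ n, N ≤ n → fn n y = 0 := by
    intro p
    obtain ⟨N, hN⟩ := h p
    refine ⟨N, (closure (U N))ᶜ, (isClosed_closure.isOpen_compl).mem_nhds hN, ?_⟩
    intro y hy n hn
    apply hf0
    intro hyU
    exact hy (subset_closure (hmono hn hyU))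
  have hsum : ∀ y : X, Summable (fun n : ℕ => (n : ℝ) * fn n y) := by
    intro y
    obtain ⟨N, V, hV, hVz⟩ := key y
    apply summable_of_ne_finset_zero (s := Finset.range N)
    intro n hn
    rw [hVz y (mem_of_mem_nhds hV) n (by simpa using hn)]
    ring
  have hGcont : Continuous G := by
    rw [continuous_iff_continuousAt]
    intro p
    obtain ⟨N, V, hV, hVz⟩ := key p
    have heq : ∀ y ∈ V, G y = ∑ n ∈ Finset.range N, (n : ℝ) * fn n y := by
      intro y hy
      apply tsum_eq_sum
      intro n hn
      rw [hVz y hy n (by simpa using hn)]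
      ring
    have hc : ContinuousAt (fun y => ∑ n ∈ Finset.range N, (n : ℝ) * fn n y) p := by
      apply Continuous.continuousAt
      exact continuous_finset_sum _ (fun n _ => (continuous_const.mul (hfc n)))
    exact hc.congr (Filter.eventuallyEq_of_mem hV (fun y hy => (heq y hy).symm))
  obtain ⟨C, hC⟩ := hpc ⟨G, hGcont⟩
  -- G (x n) ≥ n
  obtain ⟨n, hn⟩ := exists_nat_gt C
  have hGn : (n : ℝ) ≤ G (x n) := by
    have := Summable.le_tsum (hsum (x n)) n (fun i _ =>
      mul_nonneg (Nat.cast_nonneg i) (hf01 i (x n)).1)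
    simpa [hfx n] using this
  have := hC (x n)
  have : G (x n) ≤ C := (le_abs_self _).trans this
  linarith

/-- For `X` pseudocompact Tychonoff, `M` compact metrizable and `f : X → M` a continuous
surjection, the image of the embedding `C_p(f) : C_p(M) → C_p(X)`, `φ ↦ φ ∘ f`, is a
closed (linear) subspace of `C_p(X)`. -/
theorem stmt_11 (X : Type*) [TopologicalSpace X] [T35Space X]
    (hpc : ∀ g : C(X, ℝ), ∃ C : ℝ, ∀ x, |g x| ≤ C)
    (M : Type*) [TopologicalSpace M] [CompactSpace M] [MetrizableSpace M]
    (f : X → M) (hf : Continuous f) (hsurj : Function.Surjective f) :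
    IsClosed {g : Cp X | ∃ φ : M → ℝ, Continuous φ ∧ ∀ x, g.1 x = φ (f x)} := by
  apply isClosed_of_closure_subset
  intro g hg
  have heval : ∀ x : X, Continuous (fun h : Cp X => h.1 x) := fun x =>
    (continuous_apply x).comp continuous_induced_dom
  have hconst : ∀ x y : X, f x = f y → g.1 x = g.1 y := by
    intro x y hxy
    have hT : IsClosed {h : Cp X | h.1 x = h.1 y} := isClosed_eq (heval x) (heval y)
    refine hT.closure_subset (closure_mono ?_ hg)
    rintro h ⟨φ, hφc, hφ⟩
    simp only [Set.mem_setOf_eq, hφ, hxy]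
  choose sec hsec using hsurj
  refine ⟨fun m => g.1 (sec m), ?_, fun x => hconst x (sec (f x)) (hsec (f x)).symm⟩
  set φ : M → ℝ := fun m => g.1 (sec m) with hφ
  have hfac : ∀ x, g.1 x = φ (f x) := fun x => hconst x (sec (f x)) (hsec (f x)).symm
  letI : MetricSpace M := TopologicalSpace.metrizableSpaceMetric M
  rw [continuous_iff_continuousAt]
  intro m
  by_contra hcont
  rw [Metric.continuousAt_iff] at hcont
  push_neg at hcont
  obtain ⟨ε, hε, hcont⟩ := hcont
  set U : ℕ → Set X := fun n =>
    f ⁻¹' Metric.ball m (1 / (n + 1)) ∩ {x | ε / 2 < |g.1 x - φ m|} with hU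
  have hop : ∀ n, IsOpen (U n) := by
    intro n
    apply ((Metric.isOpen_ball).preimage hf).inter
    exact isOpen_lt continuous_const ((g.2.sub continuous_const).abs)
  have hne : ∀ n, (U n).Nonempty := by
    intro n
    obtain ⟨m', hd, hfar⟩ := hcont (1 / (n + 1)) (by positivity)
    refine ⟨sec m', ?_, ?_⟩
    · simpa [hsec m'] using hd
    · have : dist (φ m') (φ m) = |φ m' - φ m| := Real.dist_eq _ _
      simp only [Set.mem_setOf_eq, hfac (sec m'), hsec m']
      rw [← Real.dist_eq]
      linarith
  have hmono : Antitone U := by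
    intro i j hij y hy
    refine ⟨?_, hy.2⟩
    have h1 : (1 : ℝ) / (j + 1) ≤ 1 / (i + 1) := by
      apply one_div_le_one_div_of_le (by positivity)
      exact_mod_cast by omega
    exact Metric.ball_subset_ball h1 hy.1
  obtain ⟨p, hp⟩ := pseudocompact_cluster hpc U hop hne hmono
  have hfp : f p = m := by
    have hd : ∀ n : ℕ, dist (f p) m ≤ 1 / (n + 1) := by
      intro n
      have h1 : p ∈ closure (f ⁻¹' Metric.ball m (1 / (n + 1))) :=
        closure_mono Set.inter_subset_left (hp n)
      have h2 := hf.closure_preimage_subset _ h1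
      have := Metric.closure_ball_subset_closedBall h2
      simpa [Metric.mem_closedBall] using this
    have : dist (f p) m ≤ 0 := by
      by_contra hlt
      push_neg at hlt
      obtain ⟨n, hn⟩ := exists_nat_one_div_lt hlt
      exact absurd (hd n) (by linarith)
    exact dist_le_zero.mp this
  have hfar : ε / 2 ≤ |g.1 p - φ m| := by
    have h1 : p ∈ closure {x | ε / 2 < |g.1 x - φ m|} :=
      closure_mono Set.inter_subset_right (hp 0)
    have hcl : IsClosed {x | ε / 2 ≤ |g.1 x - φ m|} :=
      isClosed_le continuous_const ((g.2.sub continuous_const).abs)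
    exact hcl.closure_subset (closure_mono (fun y (hy : ε / 2 < |g.1 y - φ m|) => le_of_lt hy) h1)
  rw [hfac p, hfp, sub_self, abs_zero] at hfar
  linarith
end

section
/- Let ε > 0 and let (λ_k) be a sequence of finitely supported signed measures on a set K with total variation ‖λ_k‖ ≤ 1, and (V_k) pairwise disjoint subsets of K satisfying: |λ_k(V_k)| > ε for all k, |λ_k|(V_l) = 0 for k < l, and |λ_l|(V_k) ≤ ε/3^k for k < l. Define for each k a function value a_{n,k} = λ_n(φ_k) where λ_k(φ_k) = |λ_k(V_k)| > ε, a_{n,k} = 0 for n < k, and |a_{n,k}| ≤ ε/3^k for n > k. Then the linear operator Θ on c₀ defined recursively by x'_n = (x_n − Σ_{k<n} x'_k a_{n,k}) / a_{n,n} maps c₀ into c₀; i.e., if (x_n) → 0 then (x'_n) → 0. -/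
open Filter Topology Finset Real

/-!
Since `a n n > ε` and `|a n k| ≤ ε / 3 ^ k`, the recursion gives
`|x' n| ≤ |x n| / ε + ∑_{k<n} 3⁻ᵏ |x' k|`. The discrete Grönwall inequality bounds `x'`, since
`∑ 3⁻ᵏ < ∞`. Then `∑_{k<n} (|a n k| / ε) |x' k|` is a series whose terms tend to `0` for each
fixed `k` (as `a n k → 0`) and are dominated by the summable `3⁻ᵏ sup |x'|`, so it tends to `0`
by Tannery's theorem, and hence so does `x'`.
-/

theorem le_mul_exp_sum_of_le_add_sum {u β : ℕ → ℝ} {C : ℝ} (hC : 0 ≤ C) (hβ : ∀ k, 0 ≤ β k)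
    (h : ∀ n, u n ≤ C + ∑ k ∈ range n, β k * u k) (n : ℕ) :
    u n ≤ C * exp (∑ k ∈ range n, β k) := by
  let v : ℕ → ℝ := fun n => C + ∑ k ∈ range n, β k * u k
  have hstep : ∀ n ≥ 0, v (n + 1) ≤ (1 + β n) * v n + 0 := fun n _ => by
    have := mul_le_mul_of_nonneg_left (h n) (hβ n)
    simp only [v, sum_range_succ]
    linarith
  have hv : v n ≤ C * exp (∑ k ∈ range n, β k) := by
    simpa only [← range_eq_Ico, sum_const_zero, add_zero, v, range_zero, sum_empty] using
      discrete_gronwall (c := β) (b := fun _ => 0) (by simpa [v] using hC) hstep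
        (fun n _ => hβ n) (fun _ _ => le_rfl) (Nat.zero_le n)
  exact (h n).trans hv

theorem tendsto_zero_of_le_add_sum_mul {u c β : ℕ → ℝ} {b : ℕ → ℕ → ℝ}
    (hu : ∀ n, 0 ≤ u n) (hb : ∀ n k, 0 ≤ b n k) (hbβ : ∀ n k, k < n → b n k ≤ β k)
    (hβ : Summable β) (hc : Tendsto c atTop (𝓝 0))
    (hbcol : ∀ k, Tendsto (b · k) atTop (𝓝 0))
    (h : ∀ n, u n ≤ c n + ∑ k ∈ range n, b n k * u k) :
    Tendsto u atTop (𝓝 0) := by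
  have hβ0 (k : ℕ) : 0 ≤ β k := (hb (k + 1) k).trans (hbβ _ _ k.lt_succ_self)
  obtain ⟨C, hC⟩ : ∃ C, ∀ n, c n ≤ C :=
    let ⟨C, hC⟩ := hc.bddAbove_range
    ⟨C, fun n => hC (Set.mem_range_self n)⟩
  have hC0 : 0 ≤ C := calc
    0 ≤ u 0 := hu 0
    _ ≤ c 0 := by simpa using h 0
    _ ≤ C := hC 0
  set M := C * exp (∑' k, β k)
  have hM (n : ℕ) : u n ≤ M := by
    refine (le_mul_exp_sum_of_le_add_sum hC0 hβ0 (fun n => (h n).trans ?_) n).trans ?_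
    · gcongr with k hk
      · exact hC n
      · exact hu k
      · exact hbβ n k (mem_range.1 hk)
    · exact mul_le_mul_of_nonneg_left (exp_le_exp.2 (hβ.sum_le_tsum _ fun k _ => hβ0 k)) hC0
  have htail : Tendsto (fun n => ∑' k, if k < n then b n k * u k else 0) atTop (𝓝 0) := by
    have hterm (k : ℕ) :
        Tendsto (fun n => if k < n then b n k * u k else 0) atTop (𝓝 0) := by
      refine (tendsto_congr' ((eventually_gt_atTop k).mono fun n hn => (if_pos hn).symm)).1 ?_
      simpa using (hbcol k).mul_const (u k)
    have hdom (n k : ℕ) : ‖if k < n then b n k * u k else 0‖ ≤ β k * M := by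
      split_ifs with hk
      · rw [Real.norm_of_nonneg (mul_nonneg (hb n k) (hu k))]
        exact mul_le_mul (hbβ n k hk) (hM k) (hu k) (hβ0 k)
      · simpa using mul_nonneg (hβ0 k) ((hu 0).trans (hM 0))
    simpa using tendsto_tsum_of_dominated_convergence (hβ.mul_right M) hterm
      (Eventually.of_forall hdom)
  refine squeeze_zero hu (fun n => (h n).trans_eq ?_) (by simpa using hc.add htail)
  rw [tsum_eq_sum (s := range n) fun k hk => if_neg (by simpa using hk)]
  exact congrArg _ (sum_congr rfl fun k hk => (if_pos (mem_range.1 hk)).symm)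

theorem stmt_13_general (ε : ℝ) (hε : 0 < ε) (a : ℕ → ℕ → ℝ)
    (hdiag : ∀ n, ε < a n n)
    (hsmall : ∀ n k, k < n → |a n k| ≤ ε / 3 ^ k)
    (hcol : ∀ k, Tendsto (fun n => a n k) atTop (𝓝 0))
    (x x' : ℕ → ℝ)
    (hrec : ∀ n, x' n = (x n - ∑ k ∈ Finset.range n, x' k * a n k) / a n n)
    (hx : Tendsto x atTop (𝓝 0)) :
    Tendsto x' atTop (𝓝 0) := by
  have hbound (n : ℕ) :
      |x' n| ≤ |x n| / ε + ∑ k ∈ range n, |a n k| / ε * |x' k| := calc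
    |x' n| = |x n - ∑ k ∈ range n, x' k * a n k| / a n n := by
      rw [hrec n, abs_div, abs_of_pos (hε.trans (hdiag n))]
    _ ≤ |x n - ∑ k ∈ range n, x' k * a n k| / ε :=
      div_le_div_of_nonneg_left (abs_nonneg _) hε (hdiag n).le
    _ ≤ (|x n| + ∑ k ∈ range n, |a n k| * |x' k|) / ε := by
      gcongr
      refine (abs_sub _ _).trans (add_le_add_right ((abs_sum_le_sum_abs _ _).trans_eq ?_) _)
      simp only [abs_mul, mul_comm]
    _ = |x n| / ε + ∑ k ∈ range n, |a n k| / ε * |x' k| := by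
      rw [add_div, sum_div]
      simp only [div_mul_eq_mul_div]
  have hdecay (n k : ℕ) (hk : k < n) : |a n k| / ε ≤ (1 / 3) ^ k := by
    rw [div_le_iff₀ hε, one_div_pow, one_div_mul_eq_div]
    exact hsmall n k hk
  refine (tendsto_zero_iff_abs_tendsto_zero x').2 (tendsto_zero_of_le_add_sum_mul (fun n => abs_nonneg _)
    (fun n k => by positivity) hdecay (summable_geometric_of_lt_one (by norm_num) (by norm_num))
    (by simpa using hx.abs.div_const ε) (fun k => by simpa using (hcol k).abs.div_const ε) hbound)

/-- Given `ε > 0` and a lower-triangular matrix `(a n k)` with `a n n > ε`,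
`a n k = 0` for `n < k`, `|a n k| ≤ ε/3^k` for `k < n`, and `a n k → 0` as `n → ∞`
for each fixed `k`, the operator defined by the recursion
`x'_n = (x_n - ∑_{k<n} x'_k a_{n,k}) / a_{n,n}` maps `c₀` into `c₀`:
if `x_n → 0` then `x'_n → 0`. -/
theorem stmt_13 (ε : ℝ) (hε : 0 < ε) (a : ℕ → ℕ → ℝ)
    (hdiag : ∀ n, ε < a n n)
    (hupper : ∀ n k, n < k → a n k = 0)
    (hsmall : ∀ n k, k < n → |a n k| ≤ ε / 3 ^ k)
    (hcol : ∀ k, Tendsto (fun n => a n k) atTop (𝓝 0))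
    (x x' : ℕ → ℝ)
    (hrec : ∀ n, x' n = (x n - ∑ k ∈ Finset.range n, x' k * a n k) / a n n)
    (hx : Tendsto x atTop (𝓝 0)) :
    Tendsto x' atTop (𝓝 0) :=
  stmt_13_general ε hε a hdiag hsmall hcol x x' hrec hx
end

section
/- Given a sequence (ν_k) of finitely supported signed measures on a set K with ‖ν_k‖ ≤ 1, a sequence of pairwise disjoint sets (W_k) with |ν_k(W_k)| > ε and |ν_k|(W_n) = 0 for k < n, there exist a strictly increasing sequence of indices (i_k) such that, setting λ_k = ν_{i_k} and V_k = W_{i_k}, one has |λ_k(V_k)| > ε, |λ_k|(V_l) = 0 for k < l, and |λ_l|(V_k) ≤ ε/3^k for all k < l. -/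
/-! Since the `W m` are disjoint, `∑ₘ |νₙ|(W m) ≤ ‖νₙ‖ ≤ 1` for every `n`. Hence among any
`N > 3^k/ε` indices `m` there is, for each `n`, one with `|νₙ|(W m) ≤ ε/3^k`, and by
pigeonhole one such `m` serves infinitely many `n`. Choosing `i k` this way inside the
infinite set left over from the previous choices, and then shrinking that set, gives the
subsequence. -/

open Filter Topology Classical

/-- The value `ν(A) = ∑_{x ∈ A} ν({x})` of a finitely supported sign-measure `ν` on a set `A`. -/
noncomputable def svMeas {K : Type*} (ν : K →₀ ℝ) (A : Set K) : ℝ :=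
  ∑ x ∈ ν.support, if x ∈ A then ν x else 0

/-- The total variation `|ν|(A)` of a finitely supported sign-measure `ν` on a set `A`. -/
noncomputable def tvMeas {K : Type*} (ν : K →₀ ℝ) (A : Set K) : ℝ :=
  ∑ x ∈ ν.support, if x ∈ A then |ν x| else 0

section tvMeas

variable {K : Type*} (ν : K →₀ ℝ)

theorem tvMeas_eq_sum_indicator (A : Set K) :
    tvMeas ν A = ∑ x ∈ ν.support, A.indicator (fun x ↦ |ν x|) x := by
  simp only [tvMeas, Set.indicator_apply]

theorem tvMeas_mono {A B : Set K} (hAB : A ⊆ B) : tvMeas ν A ≤ tvMeas ν B := by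
  simp only [tvMeas_eq_sum_indicator]
  exact Finset.sum_le_sum fun x _ ↦
    Set.indicator_le_indicator_of_subset hAB (fun _ ↦ abs_nonneg _) x

theorem tvMeas_biUnion {ι : Type*} (F : Finset ι) {W : ι → Set K}
    (hW : (F : Set ι).PairwiseDisjoint W) :
    tvMeas ν (⋃ m ∈ F, W m) = ∑ m ∈ F, tvMeas ν (W m) := by
  simp only [tvMeas_eq_sum_indicator, Finset.indicator_biUnion_apply F W hW]
  exact Finset.sum_comm

theorem sum_tvMeas_le_tvMeas_univ {ι : Type*} {W : ι → Set K}
    (hW : Pairwise (Function.onFun Disjoint W)) (F : Finset ι) :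
    ∑ m ∈ F, tvMeas ν (W m) ≤ tvMeas ν Set.univ := by
  rw [← tvMeas_biUnion ν F (hW.set_pairwise _)]
  exact tvMeas_mono ν (Set.subset_univ _)

end tvMeas

theorem Finset.exists_mem_le_of_sum_le {ι : Type*} {F : Finset ι} {a : ι → ℝ} {C δ : ℝ}
    (hF : C < F.card * δ) (hsum : ∑ m ∈ F, a m ≤ C) : ∃ m ∈ F, a m ≤ δ := by
  by_contra! hlarge
  have := F.card_nsmul_le_sum a δ fun m hm ↦ (hlarge m hm).le
  rw [nsmul_eq_mul] at this
  linarith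

theorem exists_mem_infinite_setOf_le {a : ℕ → ℕ → ℝ}
    (hsum : ∀ n (F : Finset ℕ), ∑ m ∈ F, a n m ≤ 1)
    {δ : ℝ} (hδ : 0 < δ) {S : Set ℕ} (hS : S.Infinite) :
    ∃ m ∈ S, {n ∈ S | m < n ∧ a n m ≤ δ}.Infinite := by
  obtain ⟨N, hN⟩ := exists_nat_gt (1 / δ)
  obtain ⟨F, hFS, hFcard⟩ := hS.exists_subset_card_eq N
  have hF : 1 < F.card * δ := by rwa [hFcard, ← div_lt_iff₀ hδ]
  have hcover : S ⊆ ⋃ m ∈ F, {n ∈ S | a n m ≤ δ} := fun n hn ↦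
    let ⟨m, hm, hle⟩ := Finset.exists_mem_le_of_sum_le hF (hsum n F)
    Set.mem_biUnion hm ⟨hn, hle⟩
  obtain ⟨m, hmF, hinf⟩ : ∃ m ∈ F, {n ∈ S | a n m ≤ δ}.Infinite := by
    by_contra! hfin
    exact hS ((F.finite_toSet.biUnion hfin).subset hcover)
  refine ⟨m, hFS hmF, (hinf.sdiff (Set.finite_Iic m)).mono ?_⟩
  rintro n ⟨⟨hnS, hle⟩, hnm⟩
  exact ⟨hnS, not_le.mp hnm, hle⟩

theorem exists_strictMono_forall_lt {P : ℕ → ℕ → ℕ → Prop}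
    (h : ∀ k (S : Set ℕ), S.Infinite → ∃ m ∈ S, {n ∈ S | m < n ∧ P k m n}.Infinite) :
    ∃ i : ℕ → ℕ, StrictMono i ∧ ∀ k l, k < l → P k (i k) (i l) := by
  choose! f hf using h
  -- `S k` is the infinite set of indices still available after the first `k` choices.
  let S : ℕ → Set ℕ := fun k ↦
    Nat.rec Set.univ (fun k T ↦ {n ∈ T | f k T < n ∧ P k (f k T) n}) k
  have S_infinite : ∀ k, (S k).Infinite := fun k ↦
    Nat.rec Set.infinite_univ (fun k ih ↦ (hf k _ ih).2) k
  have S_anti : Antitone S := antitone_nat_of_succ_le fun _ _ hn ↦ hn.1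
  let i k := f k (S k)
  have hi : ∀ k l, k < l → i k < i l ∧ P k (i k) (i l) := fun k l hkl ↦
    (S_anti (Nat.succ_le_of_lt hkl) (hf l _ (S_infinite l)).1).2
  exact ⟨i, fun k l hkl ↦ (hi k l hkl).1, fun k l hkl ↦ (hi k l hkl).2⟩

/-- Given finitely supported sign-measures `ν_k` on `K` with `‖ν_k‖ ≤ 1` and pairwise
disjoint sets `W_k` with `|ν_k(W_k)| > ε` and `|ν_k|(W_n) = 0` for `k < n`, there is a
strictly increasing sequence of indices `i_k` such that `λ_k = ν_{i_k}`, `V_k = W_{i_k}`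
satisfy `|λ_k(V_k)| > ε`, `|λ_k|(V_l) = 0` for `k < l`, and `|λ_l|(V_k) ≤ ε/3^k` for `k < l`. -/
theorem stmt_14 (K : Type*) (ε : ℝ) (hε : 0 < ε)
    (ν : ℕ → (K →₀ ℝ)) (W : ℕ → Set K)
    (hdisj : Pairwise (Function.onFun Disjoint W))
    (hnorm : ∀ k, tvMeas (ν k) Set.univ ≤ 1)
    (hbig : ∀ k, ε < |svMeas (ν k) (W k)|)
    (hzero : ∀ k n, k < n → tvMeas (ν k) (W n) = 0) :
    ∃ i : ℕ → ℕ, StrictMono i ∧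
      (∀ k, ε < |svMeas (ν (i k)) (W (i k))|) ∧
      (∀ k l, k < l → tvMeas (ν (i k)) (W (i l)) = 0) ∧
      (∀ k l, k < l → tvMeas (ν (i l)) (W (i k)) ≤ ε / 3 ^ k) := by
  have hsum : ∀ n (F : Finset ℕ), ∑ m ∈ F, tvMeas (ν n) (W m) ≤ 1 := fun n F ↦
    (sum_tvMeas_le_tvMeas_univ (ν n) hdisj F).trans (hnorm n)
  obtain ⟨i, hi, hsmall⟩ := exists_strictMono_forall_lt fun k _ hS ↦
    exists_mem_infinite_setOf_le hsum (by positivity : 0 < ε / 3 ^ k) hS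
  exact ⟨i, hi, fun k ↦ hbig (i k), fun k l hkl ↦ hzero _ _ (hi hkl), hsmall⟩
end

section
/- Let X be a Tychonoff space and (λ_n) a sequence of finitely supported signed measures on X such that λ_n(f) → 0 for every continuous f : X → ℝ. Then the union S = ⋃_n supp(λ_n) is bounded in X, i.e., every continuous function φ : X → ℝ is bounded on S. -/
/-!
Suppose `|φ|` is unbounded on `⋃ n, supp λ_n`. Then one can pick measures `μ_k = λ_{n_k}` and
points `x_k ∈ supp μ_k` with `|φ (x_k)|` climbing by at least `1` above all earlier supports, and
(complete regularity) continuous bumps `ψ_k` living in the band `| |φ| - |φ (x_k)| | < 1` with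
`μ_k(ψ_k) = 1` and `ψ_k = 0` on the rest of `supp μ_k`. The bands form a locally finite family,
so `ψ = ∑ ψ_k` is continuous. Choosing `n_k` so late that `|μ_k(ψ_j)| ≤ 2⁻ʲ/4` for `j < k`
(possible because `λ_n(ψ_j) → 0`), and since later bumps vanish on earlier supports,
`μ_k(ψ) = 1 + ∑_{j<k} μ_k(ψ_j)` has absolute value at least `1/2` for every `k`,
contradicting `λ_n(ψ) → 0`.
-/

open Filter Topology Function Set

namespace Finsupp

variable {X : Type*}

/-- `μ(f)` for `μ` viewed as the signed measure `∑ₐ μ a • δₐ`. -/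
def integral (μ : X →₀ ℝ) : (X → ℝ) →ₗ[ℝ] ℝ where
  toFun f := ∑ a ∈ μ.support, μ a * f a
  map_add' f g := by simp only [Pi.add_apply, mul_add, Finset.sum_add_distrib]
  map_smul' c f := by
    simp only [Pi.smul_apply, smul_eq_mul, RingHom.id_apply, Finset.mul_sum, mul_left_comm]

theorem integral_congr (μ : X →₀ ℝ) {f g : X → ℝ} (h : ∀ a ∈ μ.support, f a = g a) :
    μ.integral f = μ.integral g :=
  Finset.sum_congr rfl fun a ha => by rw [h a ha]

theorem integral_eq_single (μ : X →₀ ℝ) {f : X → ℝ} {x : X}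
    (h : ∀ a ∈ μ.support, a ≠ x → f a = 0) : μ.integral f = μ x * f x := by
  refine Finset.sum_eq_single x (fun a ha hax => by rw [h a ha hax, mul_zero]) fun hx => ?_
  rw [Finsupp.notMem_support_iff.1 hx, zero_mul]

variable [TopologicalSpace X] [T35Space X]

theorem exists_continuous_support_subset_integral_eq_one (μ : X →₀ ℝ) {x : X}
    (hx : x ∈ μ.support) {U : Set X} (hU : IsOpen U) (hxU : x ∈ U) :
    ∃ ψ : C(X, ℝ), Function.support ψ ⊆ U ∧ μ.integral ψ = 1 := by
  classical
  set K : Set X := Uᶜ ∪ ↑(μ.support.erase x)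
  have hK : IsClosed K := hU.isClosed_compl.union (Finset.finite_toSet _).isClosed
  have hxK : x ∉ K := by simp [K, hxU]
  obtain ⟨f, hf, hfx, hfK⟩ := CompletelyRegularSpace.completely_regular x K hK hxK
  let ψ : C(X, ℝ) :=
    (μ x)⁻¹ • ⟨fun y => 1 - f y, continuous_const.sub (continuous_subtype_val.comp hf)⟩
  have hψK : ∀ y ∈ K, ψ y = 0 := fun y hy => by simp [ψ, hfK hy]
  refine ⟨ψ, fun y hy => by_contra fun hyU => hy (hψK y (Or.inl hyU)), ?_⟩
  rw [integral_eq_single (x := x) μ fun a ha hax => hψK a (Or.inr (by simp [ha, hax]))]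
  simp [ψ, hfx, Finsupp.mem_support_iff.1 hx]

end Finsupp

theorem locallyFinite_ball_of_tendsto_atTop {ι : Type*} {c : ι → ℝ}
    (hc : Tendsto c cofinite atTop) (r : ℝ) : LocallyFinite fun i => Metric.ball (c i) r := by
  intro t
  refine ⟨Metric.ball t 1, Metric.ball_mem_nhds t one_pos, ?_⟩
  refine (eventually_cofinite.1 (hc.eventually_ge_atTop (t + 1 + r))).subset ?_
  rintro i ⟨y, hyi, hyt⟩
  rw [Metric.mem_ball, Real.dist_eq, abs_lt] at hyi hyt
  simp only [mem_ofPred_eq, not_le]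
  linarith

section GlidingHump

variable {X : Type*} [TopologicalSpace X]

theorem exists_continuous_forall_le_abs_integral {μ : ℕ → X →₀ ℝ} {ψ : ℕ → C(X, ℝ)}
    (hψ : LocallyFinite fun k => support (ψ k))
    (hone : ∀ k, (μ k).integral (ψ k) = 1)
    (hvanish : ∀ j k, k < j → ∀ y ∈ (μ k).support, ψ j y = 0)
    (hsmall : ∀ j k, j < k → |(μ k).integral (ψ j)| ≤ (1 / 2) ^ j / 4) :
    ∃ f : C(X, ℝ), ∀ k, 1 / 2 ≤ |(μ k).integral f| := by
  refine ⟨⟨fun y => ∑ᶠ j, ψ j y, continuous_finsum (fun j => (ψ j).continuous) hψ⟩, fun k => ?_⟩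
  have hsum : (μ k).integral (fun y => ∑ᶠ j, ψ j y) =
      ∑ j ∈ Finset.range k, (μ k).integral (ψ j) + 1 := by
    rw [← hone k, ← Finset.sum_range_succ, ← map_sum]
    refine (μ k).integral_congr fun y hy => ?_
    rw [Finset.sum_apply]
    refine finsum_eq_sum_of_support_subset _ fun j hj => ?_
    by_contra hjk
    exact hj (hvanish j k (by simpa using hjk) y hy)
  have htail : |∑ j ∈ Finset.range k, (μ k).integral (ψ j)| ≤ 1 / 2 :=
    calc |∑ j ∈ Finset.range k, (μ k).integral (ψ j)|
        ≤ ∑ j ∈ Finset.range k, |(μ k).integral (ψ j)| := Finset.abs_sum_le_sum_abs _ _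
      _ ≤ ∑ j ∈ Finset.range k, (1 / 2 : ℝ) ^ j / 4 :=
          Finset.sum_le_sum fun j hj => hsmall j k (Finset.mem_range.1 hj)
      _ = (∑ j ∈ Finset.range k, (1 / 2 : ℝ) ^ j) / 4 := (Finset.sum_div ..).symm
      _ ≤ 1 / 2 := by linarith [sum_geometric_two_le k]
  change 1 / 2 ≤ |(μ k).integral fun y => ∑ᶠ j, ψ j y|
  rw [hsum]
  linarith [le_abs_self (∑ j ∈ Finset.range k, (μ k).integral (ψ j) + 1), (abs_le.1 htail).1]

end GlidingHump

section Humps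

variable {X : Type*} {l : ℕ → X →₀ ℝ} {Φ : X → ℝ}

theorem exists_mem_support_lt_of_unbounded
    (hunb : ∀ M, ∃ x ∈ ⋃ n, ((l n).support : Set X), M < Φ x) {p : ℕ → Prop}
    (hp : ∀ᶠ n in atTop, p n) (B : ℝ) : ∃ n, p n ∧ ∃ x ∈ (l n).support, B < Φ x := by
  obtain ⟨N, hN⟩ := eventually_atTop.1 hp
  obtain ⟨B', hB'⟩ := (((finite_lt_nat N).biUnion fun n _ =>
    (l n).support.finite_toSet).image Φ).bddAbove
  obtain ⟨x, hx, hBx⟩ := hunb (max B B')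
  obtain ⟨n, hxn⟩ := mem_iUnion.1 hx
  have hNn : N ≤ n := by
    by_contra! hnN
    linarith [hB' (mem_image_of_mem Φ (mem_biUnion hnN hxn)), le_max_right B B']
  exact ⟨n, hN n hNn, x, hxn, (le_max_left B B').trans_lt hBx⟩

variable [TopologicalSpace X]

variable (l Φ) in
structure Hump where
  index : ℕ
  center : X
  bump : C(X, ℝ)
  center_mem : center ∈ (l index).support
  support_bump : support bump ⊆ Φ ⁻¹' Metric.ball (Φ center) 1
  integral_bump : (l index).integral bump = 1

namespace Hump

def Precedes (a b : Hump l Φ) : Prop :=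
  a.index < b.index ∧ (∀ y ∈ (l a.index).support, Φ y + 1 ≤ Φ b.center) ∧
    |(l b.index).integral a.bump| ≤ (1 / 2) ^ a.index / 4

theorem exists_forall_precedes [T35Space X] (hΦ : Continuous Φ)
    (hnull : ∀ f : C(X, ℝ), Tendsto (fun n => (l n).integral f) atTop (𝓝 0))
    (hunb : ∀ M, ∃ x ∈ ⋃ n, ((l n).support : Set X), M < Φ x) (s : Finset (Hump l Φ)) :
    ∃ b : Hump l Φ, ∀ a ∈ s, a.Precedes b := by
  obtain ⟨B, hB⟩ := ((s.finite_toSet.biUnion fun a _ =>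
    (l a.index).support.finite_toSet).image Φ).bddAbove
  have hsmall : ∀ᶠ n in atTop, ∀ a ∈ s,
      a.index < n ∧ |(l n).integral a.bump| ≤ (1 / 2) ^ a.index / 4 := by
    refine (eventually_all_finset s).2 fun a _ => (eventually_gt_atTop a.index).and ?_
    have hε : (0 : ℝ) < (1 / 2) ^ a.index / 4 := by positivity
    refine ((hnull a.bump).eventually (Metric.closedBall_mem_nhds 0 hε)).mono fun n hn => ?_
    rwa [dist_zero_right, Real.norm_eq_abs] at hn
  obtain ⟨n, hn, x, hx, hBx⟩ := exists_mem_support_lt_of_unbounded hunb hsmall (B + 1)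
  obtain ⟨ψ, hψ, hψ1⟩ := (l n).exists_continuous_support_subset_integral_eq_one hx
    (Metric.isOpen_ball.preimage hΦ) (Metric.mem_ball_self one_pos)
  refine ⟨⟨n, x, ψ, hx, hψ, hψ1⟩, fun a ha => ⟨(hn a ha).1, fun y hy => ?_, (hn a ha).2⟩⟩
  linarith [hB (mem_image_of_mem Φ (mem_biUnion (Finset.mem_coe.2 ha) hy))]

theorem bump_eq_zero_of_precedes {a b : Hump l Φ} (hab : a.Precedes b) {y : X}
    (hy : y ∈ (l a.index).support) : b.bump y = 0 := by
  refine notMem_support.1 fun hyb => ?_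
  have hball := b.support_bump hyb
  rw [mem_preimage, Metric.mem_ball, Real.dist_eq, abs_lt] at hball
  linarith [hab.2.1 y hy]

theorem locallyFinite_support_bump (hΦ : Continuous Φ) {h : ℕ → Hump l Φ}
    (hh : ∀ k, (h k).Precedes (h (k + 1))) : LocallyFinite fun k => support (h k).bump := by
  have hgrowth : ∀ k : ℕ, Φ (h 0).center + k ≤ Φ (h k).center := by
    intro k
    induction k with
    | zero => simp
    | succ k ih =>
      push_cast
      linarith [(hh k).2.1 _ (h k).center_mem]
  have htendsto : Tendsto (fun k => Φ (h k).center) cofinite atTop := by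
    rw [Nat.cofinite_eq_atTop]
    exact tendsto_atTop_mono hgrowth
      (tendsto_atTop_add_const_left _ _ tendsto_natCast_atTop_atTop)
  exact ((locallyFinite_ball_of_tendsto_atTop htendsto 1).preimage_continuous hΦ).subset
    fun k => (h k).support_bump

end Hump

end Humps

/-- If `(λ_n)` is a sequence of finitely supported sign-measures on a Tychonoff space `X`
with `λ_n(f) → 0` for every continuous `f : X → ℝ`, then `S = ⋃_n supp(λ_n)` is bounded
in `X`: every continuous `φ : X → ℝ` is bounded on `S`. -/
theorem stmt_15 (X : Type*) [TopologicalSpace X] [T35Space X]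
    (l : ℕ → (X →₀ ℝ))
    (hnull : ∀ f : C(X, ℝ),
      Tendsto (fun n => ∑ a ∈ (l n).support, (l n) a * f a) atTop (𝓝 0)) :
    ∀ φ : C(X, ℝ), ∃ M : ℝ, ∀ x ∈ ⋃ n, ((l n).support : Set X), |φ x| ≤ M := by
  intro φ
  by_contra! hunb
  have hΦ : Continuous fun x => |φ x| := φ.continuous.abs
  obtain ⟨h, -, hh⟩ := exists_seq_of_forall_finset_exists (fun _ => True) Hump.Precedes
    fun s _ => (Hump.exists_forall_precedes hΦ hnull hunb s).imp fun _ hb => ⟨trivial, hb⟩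
  have hindex : StrictMono fun k => (h k).index := fun j k hjk => (hh j k hjk).1
  obtain ⟨f, hf⟩ := exists_continuous_forall_le_abs_integral (μ := fun k => l (h k).index)
    (Hump.locallyFinite_support_bump hΦ fun k => hh k (k + 1) k.lt_succ_self)
    (fun k => (h k).integral_bump)
    (fun j k hkj _ hy => Hump.bump_eq_zero_of_precedes (hh k j hkj) hy)
    (fun j k hjk => (hh j k hjk).2.2.trans <| div_le_div_of_nonneg_right
      (pow_le_pow_of_le_one (by norm_num) (by norm_num) hindex.le_apply) (by norm_num))
  obtain ⟨k, hk⟩ := (((hnull f).comp hindex.tendsto_atTop).eventually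
    (Metric.ball_mem_nhds 0 one_half_pos)).exists
  rw [dist_zero_right, Real.norm_eq_abs] at hk
  exact (hf k).not_gt hk
end
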